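/- arXiv:1612.04321 — 8 statements merged into one kernel-verified Lean document; each statement's English description precedes it below -/
import Mathlib

section
/- Let f be a nonzero complex analytic one-periodic function defined on a neighborhood of the strip T_h = {x + iy : x ∈ ℝ, |y| ≤ h} with h > 0. Then for every 0 < δ < h there exists η > 0 such that for every real μ there is some y ∈ [δ/2, δ] with |f(x + iy) − μ| > η for all x ∈ ℝ. -/
/-!
For a fixed real `μ`, the zeros of `f - μ` are isolated, so only finitely many of them lie in the
compact rectangle `[0, 1] × [δ/2, δ]`, and some height `y ∈ [δ/2, δ]` meets none of them. By
periodicity the line at height `y` then stays a positive distance `ε μ` away from `μ`, and the same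
line still works, with half the margin, for all values in a neighbourhood of `μ`. Compactness of
`[-R, R]` makes the margin uniform in `μ`, and for `|μ| > R` the bounded line at height `δ` works.
-/

open Complex Set Filter Topology

theorem AnalyticOnNhd.finite_setOf_eq_of_isCompact {𝕜 E : Type*} [NontriviallyNormedField 𝕜]
    [NormedAddCommGroup E] [NormedSpace 𝕜 E] {f : 𝕜 → E} {U K : Set 𝕜} {z₀ : 𝕜} {c : E}
    (hf : AnalyticOnNhd 𝕜 f U) (hU : IsConnected U) (hz₀ : z₀ ∈ U) (hne : f z₀ ≠ c)
    (hK : IsCompact K) (hKU : K ⊆ U) : {z ∈ K | f z = c}.Finite := by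
  have hcod := (hf.sub analyticOnNhd_const).preimage_zero_mem_codiscreteWithin
    (sub_ne_zero.2 hne) hz₀ hU
  refine (hK.finite_sdiff_of_mem_codiscreteWithin (codiscreteWithin_mono hKU hcod)).subset ?_
  rintro z ⟨hzK, hz⟩
  simp [hzK, hz]

theorem Function.Periodic.exists_pos_forall_lt_norm {E : Type*} [NormedAddCommGroup E]
    {g : ℝ → E} {c : ℝ} (hper : Function.Periodic g c) (hc : c ≠ 0) (hg : Continuous g)
    (hg₀ : ∀ x, g x ≠ 0) : ∃ ε > 0, ∀ x, ε < ‖g x‖ := by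
  obtain ⟨_, ⟨x₀, rfl⟩, hmin⟩ := (hper.compact_of_continuous hc hg).exists_isMinOn
    (range_nonempty g) continuous_norm.continuousOn
  have hpos : 0 < ‖g x₀‖ := norm_pos_iff.2 (hg₀ x₀)
  exact ⟨‖g x₀‖ / 2, half_pos hpos, fun x => by linarith [isMinOn_iff.1 hmin _ (mem_range_self x)]⟩

theorem IsCompact.exists_pos_forall_exists_lt_norm_sub {ι X E : Type*}
    [SeminormedAddCommGroup E] {K : Set E} (hK : IsCompact K) (φ : ι → X → E)
    (h : ∀ μ ∈ K, ∃ i, ∃ ε > 0, ∀ x, ε < ‖φ i x - μ‖) :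
    ∃ η > 0, ∀ μ ∈ K, ∃ i, ∀ x, η < ‖φ i x - μ‖ := by
  have hev : ∀ᶠ η in 𝓝 (0 : ℝ), ∀ μ ∈ K, ∃ i, ∀ x, η < ‖φ i x - μ‖ := by
    refine hK.eventually_forall_of_forall_eventually fun μ hμ => ?_
    obtain ⟨i, ε, hε, hi⟩ := h μ hμ
    rw [nhds_prod_eq]
    filter_upwards [prod_mem_prod (Metric.ball_mem_nhds 0 (half_pos hε))
      (Metric.ball_mem_nhds μ (half_pos hε))] with ⟨η, ν⟩ ⟨hη, hν⟩
    refine ⟨i, fun x => ?_⟩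
    rw [Metric.mem_ball, Real.dist_0_eq_abs] at hη
    rw [Metric.mem_ball, dist_eq_norm] at hν
    linarith [hi x, norm_sub_le_norm_sub_add_norm_sub (φ i x) ν μ, le_abs_self η]
  obtain ⟨η, hη, hpos⟩ :=
    ((hev.filter_mono nhdsWithin_le_nhds).and (eventually_mem_nhdsWithin : ∀ᶠ η in 𝓝[>] (0 : ℝ), η ∈ Ioi 0)).exists
  exact ⟨η, hpos, hη⟩

theorem IsClosed.exists_pos_forall_exists_lt_norm_sub {ι X E : Type*}
    [NormedAddCommGroup E] [ProperSpace E] {S : Set E} (hS : IsClosed S) (φ : ι → X → E)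
    (h : ∀ μ ∈ S, ∃ i, ∃ ε > 0, ∀ x, ε < ‖φ i x - μ‖)
    (hbdd : ∃ i, Bornology.IsBounded (range (φ i))) :
    ∃ η > 0, ∀ μ ∈ S, ∃ i, ∀ x, η < ‖φ i x - μ‖ := by
  obtain ⟨i₀, hi₀⟩ := hbdd
  obtain ⟨M, hM⟩ := hi₀.exists_norm_le
  obtain ⟨η, hη, hK⟩ := ((isCompact_closedBall (0 : E) (M + 1)).inter_left hS)
    |>.exists_pos_forall_exists_lt_norm_sub φ fun μ hμ => h μ hμ.1
  refine ⟨min η 1, lt_min hη one_pos, fun μ hμ => ?_⟩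
  by_cases hμM : ‖μ‖ ≤ M + 1
  · obtain ⟨i, hi⟩ := hK μ ⟨hμ, mem_closedBall_zero_iff.2 hμM⟩
    exact ⟨i, fun x => (min_le_left η 1).trans_lt (hi x)⟩
  · refine ⟨i₀, fun x => ?_⟩
    have := norm_sub_norm_le μ (φ i₀ x)
    rw [norm_sub_rev] at this
    linarith [min_le_right η 1, hM _ (mem_range_self x)]

theorem Function.Periodic.comp_ofReal_add_mul_I {E : Type*} {f : ℂ → E}
    (hper : Function.Periodic f 1) (y : ℝ) :
    Function.Periodic (fun x : ℝ => f (x + y * I)) 1 := fun x => by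
  simpa [add_right_comm] using hper (x + y * I)

theorem ContinuousOn.continuous_comp_ofReal_add_mul_I {E : Type*} [TopologicalSpace E]
    {f : ℂ → E} {h y : ℝ} (hf : ContinuousOn f {z : ℂ | |z.im| ≤ h}) (hy : |y| ≤ h) :
    Continuous fun x : ℝ => f (x + y * I) :=
  hf.comp_continuous (by fun_prop) fun x => by simpa using hy

theorem convex_setOf_abs_im_le (h : ℝ) : Convex ℝ {z : ℂ | |z.im| ≤ h} := by
  have hstrip : {z : ℂ | |z.im| ≤ h} = imLm ⁻¹' Icc (-h) h := by
    ext z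
    simp [abs_le]
  exact hstrip ▸ (convex_Icc (-h) h).linear_preimage imLm

theorem exists_mem_Icc_forall_lt_norm_sub {f : ℂ → ℂ} {h a b : ℝ}
    (hf : AnalyticOnNhd ℂ f {z : ℂ | |z.im| ≤ h}) (hper : Function.Periodic f 1) (hab : a < b)
    (hsub : Icc a b ⊆ Icc (-h) h) {μ : ℂ} (hne : ∃ z : ℂ, |z.im| ≤ h ∧ f z ≠ μ) :
    ∃ y ∈ Icc a b, ∃ ε > 0, ∀ x : ℝ, ε < ‖f (x + y * I) - μ‖ := by
  obtain ⟨z₀, hz₀, hfz₀⟩ := hne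
  have hconn : IsConnected {z : ℂ | |z.im| ≤ h} :=
    ⟨⟨z₀, hz₀⟩, (convex_setOf_abs_im_le h).isPreconnected⟩
  have hKU : Icc 0 1 ×ℂ Icc a b ⊆ {z : ℂ | |z.im| ≤ h} := fun z hz => abs_le.2 (hsub hz.2)
  have hZ := hf.finite_setOf_eq_of_isCompact hconn hz₀ hfz₀
    (isCompact_Icc.reProdIm isCompact_Icc) hKU
  obtain ⟨y, hy, hyZ⟩ := ((Icc_infinite hab).sdiff (hZ.image im)).nonempty
  have hy' : |y| ≤ h := abs_le.2 (hsub hy)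
  have hline := (hper.comp_ofReal_add_mul_I y).comp (· - μ)
  refine ⟨y, hy, hline.exists_pos_forall_lt_norm one_ne_zero
    ((hf.continuousOn.continuous_comp_ofReal_add_mul_I hy').sub continuous_const) fun x hx => ?_⟩
  -- a zero on the line would give one at height `y` in the rectangle
  obtain ⟨x', hx', hxx'⟩ := hline.exists_mem_Ico₀ one_pos x
  refine hyZ ⟨x' + y * I, ⟨⟨?_, ?_⟩, sub_eq_zero.1 (hxx'.symm.trans hx)⟩, by simp⟩
  · simpa using Ico_subset_Icc_self hx'
  · simpa using hy

theorem stmt0_general (h : ℝ) (f : ℂ → ℂ)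
    (hf : AnalyticOnNhd ℂ f {z : ℂ | |z.im| ≤ h})
    (hper : Function.Periodic f 1)
    (hne : ∀ μ : ℝ, ∃ z : ℂ, |z.im| ≤ h ∧ f z ≠ (μ : ℂ)) :
    ∀ δ : ℝ, 0 < δ → δ < h →
      ∃ η > (0 : ℝ), ∀ μ : ℝ, ∃ y ∈ Set.Icc (δ / 2) δ, ∀ x : ℝ,
        η < ‖f (x + y * Complex.I) - (μ : ℂ)‖ := by
  intro δ hδ hδh
  have hsub : Icc (δ / 2) δ ⊆ Icc (-h) h := Icc_subset_Icc (by linarith) hδh.le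
  have hδ_mem : δ ∈ Icc (δ / 2) δ := ⟨by linarith, le_rfl⟩
  have hbdd : Bornology.IsBounded (range fun x : ℝ => f (x + δ * I)) :=
    (hper.comp_ofReal_add_mul_I δ).isBounded_of_continuous one_ne_zero
      (hf.continuousOn.continuous_comp_ofReal_add_mul_I (abs_le.2 (hsub hδ_mem)))
  obtain ⟨η, hη, hgap⟩ := isUniformEmbedding_ofReal.isClosedEmbedding.isClosed_range
    |>.exists_pos_forall_exists_lt_norm_sub (fun (y : Icc (δ / 2) δ) (x : ℝ) => f (x + y * I))
      (by
        rintro _ ⟨μ, rfl⟩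
        obtain ⟨y, hy, hε⟩ := exists_mem_Icc_forall_lt_norm_sub hf hper (by linarith) hsub (hne μ)
        exact ⟨⟨y, hy⟩, hε⟩)
      ⟨⟨δ, hδ_mem⟩, hbdd⟩
  refine ⟨η, hη, fun μ => ?_⟩
  obtain ⟨y, hy⟩ := hgap μ ⟨μ, rfl⟩
  exact ⟨y, y.2, hy⟩

/-- For a nonzero analytic one-periodic function on a neighborhood of the strip `T_h`,
for every `0 < δ < h` there is `η > 0` such that for every real `μ` some horizontal
line at height `y ∈ [δ/2, δ]` stays at distance more than `η` from `μ`. -/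
theorem stmt0 (h : ℝ) (hh : 0 < h) (f : ℂ → ℂ)
    (hf : AnalyticOnNhd ℂ f {z : ℂ | |z.im| ≤ h})
    (hper : Function.Periodic f 1)
    (hne : ∀ μ : ℝ, ∃ z : ℂ, |z.im| ≤ h ∧ f z ≠ (μ : ℂ)) :
    ∀ δ : ℝ, 0 < δ → δ < h →
      ∃ η > (0 : ℝ), ∀ μ : ℝ, ∃ y ∈ Set.Icc (δ / 2) δ, ∀ x : ℝ,
        η < ‖f (x + y * Complex.I) - (μ : ℂ)‖ :=
  stmt0_general h f hf hper hne
end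

section
/- Let z₀ ∈ ℂ with |Im z₀| < h, and for real y with |y| ≤ h define the winding number of the curve x ↦ e^{2πi(x+iy)} − e^{2πi z₀}, x ∈ [0,1], around 0. This winding number equals 1 if y < Im z₀ and equals 0 if y > Im z₀. -/
/-!
Writing `R = e^{-2πy}` and `w = e^{2πi z₀}`, the curve is `θ ↦ R e^{iθ} - w` reparametrised by
`θ = 2πx`, so its winding number is `(2πi)⁻¹ ∮_{|z|=R} dz / (z - w)`. This is `1` when `w` lies
inside the circle and `0` (Cauchy's theorem) when it lies outside, and `|w| = e^{-2π Im z₀} < R`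
exactly when `y < Im z₀`.
-/

open Complex Metric
open scoped Real

theorem circleIntegral_sub_inv_of_notMem_closedBall {c w : ℂ} {R : ℝ} (hR : 0 ≤ R)
    (hw : w ∉ closedBall c R) : (∮ z in C(c, R), (z - w)⁻¹) = 0 := by
  refine DiffContOnCl.circleIntegral_eq_zero hR (DifferentiableOn.diffContOnCl ?_)
  refine DifferentiableOn.mono (fun z hz => ?_) closure_ball_subset_closedBall
  exact ((differentiableAt_id.sub_const w).inv
    (sub_ne_zero.2 (ne_of_mem_of_not_mem hz hw))).differentiableWithinAt

theorem circleIntegral_eq_integral_zero_one (f : ℂ → ℂ) (c : ℂ) (R : ℝ) :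
    ∫ t in (0 : ℝ)..1, deriv (fun t : ℝ => circleMap c R (2 * π * t)) t *
        f (circleMap c R (2 * π * t)) = ∮ z in C(c, R), f z := by
  have h := intervalIntegral.smul_integral_comp_mul_left
    (fun θ => deriv (circleMap c R) θ • f (circleMap c R θ)) (2 * π) (a := 0) (b := 1)
  rw [mul_zero, mul_one] at h
  rw [circleIntegral, ← h, ← intervalIntegral.integral_smul]
  congr 1 with t
  rw [deriv_comp_mul_left (f := circleMap c R), smul_eq_mul, smul_mul_assoc]

theorem exp_two_pi_I_mul_eq_circleMap (x y : ℝ) :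
    exp (2 * π * I * (x + y * I)) = circleMap 0 (Real.exp (-(2 * π * y))) (2 * π * x) := by
  rw [circleMap_zero, ofReal_exp, ← Complex.exp_add]
  congr 1
  push_cast
  linear_combination (2 * π * y) * I_sq

theorem norm_exp_two_pi_I_mul (z : ℂ) : ‖exp (2 * π * I * z)‖ = Real.exp (-(2 * π * z.im)) := by
  simp [norm_exp, mul_re, mul_im]

theorem exp_neg_two_pi_mul_lt_iff {a b : ℝ} :
    Real.exp (-(2 * π * a)) < Real.exp (-(2 * π * b)) ↔ b < a := by
  rw [Real.exp_lt_exp, neg_lt_neg_iff, mul_lt_mul_iff_right₀ Real.two_pi_pos]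

theorem stmt3_general (z₀ : ℂ) (y : ℝ)
    (hne : y ≠ z₀.im) :
    (1 / (2 * Real.pi * Complex.I)) *
        ∫ x in (0 : ℝ)..1,
          deriv (fun t : ℝ =>
              Complex.exp (2 * Real.pi * Complex.I * (t + y * Complex.I)) -
                Complex.exp (2 * Real.pi * Complex.I * z₀)) x /
            (Complex.exp (2 * Real.pi * Complex.I * (x + y * Complex.I)) -
              Complex.exp (2 * Real.pi * Complex.I * z₀)) =
      if y < z₀.im then 1 else 0 := by
  set w := exp (2 * π * I * z₀)
  set R := Real.exp (-(2 * π * y))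
  have hwinding : (∫ x in (0 : ℝ)..1, deriv (fun t : ℝ => exp (2 * π * I * (t + y * I)) - w) x /
      (exp (2 * π * I * (x + y * I)) - w)) = ∮ z in C(0, R), (z - w)⁻¹ := by
    simp only [deriv_sub_const, exp_two_pi_I_mul_eq_circleMap, div_eq_mul_inv]
    exact circleIntegral_eq_integral_zero_one (fun z => (z - w)⁻¹) 0 R
  rw [hwinding]
  split_ifs with hlt
  · have hwR : ‖w‖ < R := by
      rwa [norm_exp_two_pi_I_mul, exp_neg_two_pi_mul_lt_iff]
    rw [circleIntegral.integral_sub_inv_of_mem_ball (by simpa using hwR)]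
    field_simp
  · have hRw : R < ‖w‖ := by
      rw [norm_exp_two_pi_I_mul, exp_neg_two_pi_mul_lt_iff]
      exact lt_of_le_of_ne (not_lt.1 hlt) hne.symm
    rw [circleIntegral_sub_inv_of_notMem_closedBall (Real.exp_pos _).le (by simpa using hRw),
      mul_zero]

/-- Winding number of `x ↦ e^{2πi(x+iy)} − e^{2πi z₀}`, `x ∈ [0,1]`, around 0:
it equals 1 if `y < Im z₀` and 0 if `y > Im z₀`. -/
theorem stmt3 (h : ℝ) (z₀ : ℂ) (hz : |z₀.im| < h) (y : ℝ) (hy : |y| ≤ h)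
    (hne : y ≠ z₀.im) :
    (1 / (2 * Real.pi * Complex.I)) *
        ∫ x in (0 : ℝ)..1,
          deriv (fun t : ℝ =>
              Complex.exp (2 * Real.pi * Complex.I * (t + y * Complex.I)) -
                Complex.exp (2 * Real.pi * Complex.I * z₀)) x /
            (Complex.exp (2 * Real.pi * Complex.I * (x + y * Complex.I)) -
              Complex.exp (2 * Real.pi * Complex.I * z₀)) =
      if y < z₀.im then 1 else 0 :=
  stmt3_general z₀ y hne
end

section
/- Let f : T_h → ℂ be analytic and one-periodic, and suppose that for some −h ≤ y₁ < y₂ ≤ h one has inf{|f(z)| : y₁ ≤ Im z ≤ y₂} > 0. Then the function I(y) = ∫₀¹ log|f(x + iy)| dx is affine (in fact linear with slope −2π · ind) on [y₁, y₂]; more precisely, for all y in [y₁, y₂], the right derivative (1/2π) D₊ I(y) equals minus the winding number of x ↦ f(x + iy₁) around 0. -/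
/-!
On the closed strip `y₁ ≤ Im z ≤ y₂` the function `f` is analytic and zero-free, so its
logarithmic derivative `g = f'/f` is analytic and one-periodic there. Cauchy's theorem on the
rectangle `[0, 1] × [y₁, t]`, whose vertical sides cancel by periodicity, shows that the
horizontal means `∫₀¹ g(x + it) dx` all equal `w = ∫₀¹ g(x + iy₁) dx`. Since
`∂ₜ log |f(x + it)| = Re (i g(x + it))`, integrating in `t` and exchanging the order of
integration gives `I(y) = I(y₁) + (y - y₁) Re (i w)`, and `Re (i w) / 2π = -Re (w / 2πi)`.
-/

open Complex Set Function Filter Topology MeasureTheory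
open scoped Interval

theorem ContinuousOn.intervalIntegral_intervalIntegral_swap {E : Type*} [NormedAddCommGroup E]
    [NormedSpace ℝ E] {F : ℝ → ℝ → E} {a b c d : ℝ}
    (hF : ContinuousOn (uncurry F) ([[a, b]] ×ˢ [[c, d]])) :
    ∫ x in a..b, ∫ y in c..d, F x y = ∫ y in c..d, ∫ x in a..b, F x y :=
  MeasureTheory.intervalIntegral_intervalIntegral_swap <|
    (hF.integrableOn_compact (isCompact_uIcc.prod isCompact_uIcc)).mono_set
      (prod_mono uIoc_subset_uIcc uIoc_subset_uIcc)

theorem HasDerivAt.log_norm {γ : ℝ → ℂ} {γ' : ℂ} {t : ℝ} (hγ : HasDerivAt γ γ' t)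
    (h0 : γ t ≠ 0) : HasDerivAt (fun s => Real.log ‖γ s‖) (γ' / γ t).re t := by
  have hsq : (fun s => Real.log ‖γ s‖) = fun s => Real.log (‖γ s‖ ^ 2) / 2 := by
    funext s; rw [Real.log_pow]; ring
  rw [hsq]
  refine ((hγ.norm_sq.log (by positivity)).div_const 2).congr_deriv ?_
  rw [Complex.div_re, Complex.inner, ← Complex.normSq_eq_norm_sq]
  simp only [mul_re, conj_re, conj_im, mul_neg, sub_neg_eq_add]
  field_simp

theorem HasDerivAt.comp_add_ofReal_mul_I {f : ℂ → ℂ} {f' : ℂ} {x t : ℝ}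
    (hf : HasDerivAt f f' (x + t * I)) :
    HasDerivAt (fun s : ℝ => f (x + s * I)) (f' * I) t := by
  have hline : HasDerivAt (fun s : ℝ => (x : ℂ) + s * I) I t := by
    simpa using ((hasDerivAt_id t).ofReal_comp.mul_const I).const_add (x : ℂ)
  exact hf.comp t hline

theorem Function.Periodic.logDeriv {𝕜 𝕜' : Type*} [NontriviallyNormedField 𝕜]
    [NontriviallyNormedField 𝕜'] [NormedAlgebra 𝕜 𝕜'] {f : 𝕜 → 𝕜'} {p : 𝕜}
    (hf : Periodic f p) : Periodic (logDeriv f) p := by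
  intro z
  rw [logDeriv_apply, logDeriv_apply, hf z, ← deriv_comp_add_const, funext hf]

theorem integral_add_mul_I_eq_of_periodic {E : Type*} [NormedAddCommGroup E] [NormedSpace ℂ E]
    [CompleteSpace E] {g : ℂ → E} {p a b : ℝ} (hper : Periodic g p)
    (hg : DifferentiableOn ℂ g ([[0, p]] ×ℂ [[a, b]])) :
    ∫ x in (0 : ℝ)..p, g (x + a * I) = ∫ x in (0 : ℝ)..p, g (x + b * I) := by
  have hrect := integral_boundary_rect_eq_zero_of_differentiableOn g (a * I) (p + b * I)
    (by simpa using hg)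
  have hsides : ∫ y in a..b, g (p + y * I) = ∫ y in a..b, g (y * I) :=
    intervalIntegral.integral_congr fun y _ => by rw [add_comm, hper]
  simp only [add_re, ofReal_re, mul_re, I_re, mul_zero, ofReal_im, I_im, mul_one, sub_self,
    add_zero, add_im, mul_im, zero_add, ofReal_zero, hsides, add_sub_cancel_right] at hrect
  exact sub_eq_zero.1 hrect

theorem integral_log_norm_add_mul_I_eq {f : ℂ → ℂ} {p a b : ℝ} (hper : Periodic f p)
    (hab : a ≤ b) (hf : AnalyticOnNhd ℂ f (im ⁻¹' Icc a b))
    (hne : ∀ z ∈ im ⁻¹' Icc a b, f z ≠ 0) :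
    ∫ x in (0 : ℝ)..p, Real.log ‖f (x + b * I)‖ =
      (∫ x in (0 : ℝ)..p, Real.log ‖f (x + a * I)‖) +
        (b - a) * (I * ∫ x in (0 : ℝ)..p, logDeriv f (x + a * I)).re := by
  have hmem : ∀ (x : ℝ) {s : ℝ}, s ∈ Icc a b → (x : ℂ) + s * I ∈ im ⁻¹' Icc a b := by
    intro x s hs; simpa using hs
  have hlogDeriv : DifferentiableOn ℂ (logDeriv f) (im ⁻¹' Icc a b) := fun z hz =>
    ((hf.deriv z hz).differentiableAt.div (hf z hz).differentiableAt
      (hne z hz)).differentiableWithinAt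
  set G : ℝ → ℝ → ℝ := fun x s => (I * logDeriv f (x + s * I)).re
  have hG : ContinuousOn (uncurry G) (univ ×ˢ Icc a b) :=
    continuous_re.comp_continuousOn <| continuousOn_const.mul <|
      hlogDeriv.continuousOn.comp (f := fun q : ℝ × ℝ => (q.1 : ℂ) + q.2 * I) (by fun_prop)
        fun q hq => hmem q.1 hq.2
  have hvertical : ∀ x : ℝ, ∫ s in a..b, G x s =
      Real.log ‖f (x + b * I)‖ - Real.log ‖f (x + a * I)‖ := by
    intro x
    refine intervalIntegral.integral_eq_sub_of_hasDerivAt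
      (f := fun s => Real.log ‖f (x + s * I)‖) (fun s hs => ?_) ?_
    · rw [uIcc_of_le hab] at hs
      refine ((hf _ (hmem x hs)).differentiableAt.hasDerivAt.comp_add_ofReal_mul_I.log_norm
        (hne _ (hmem x hs))).congr_deriv ?_
      simp only [G, logDeriv_apply, mul_div_right_comm, mul_comm I]
    · refine (hG.comp (f := fun s : ℝ => (x, s)) (by fun_prop) fun s hs => ?_).intervalIntegrable
      exact ⟨mem_univ x, by rwa [uIcc_of_le hab] at hs⟩
  have hhorizontal : ∀ s ∈ Icc a b,
      ∫ x in (0 : ℝ)..p, G x s = (I * ∫ x in (0 : ℝ)..p, logDeriv f (x + a * I)).re := by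
    intro s hs
    have hrect : DifferentiableOn ℂ (logDeriv f) ([[0, p]] ×ℂ [[a, s]]) :=
      hlogDeriv.mono fun z hz => by
        rw [mem_reProdIm, uIcc_of_le hs.1] at hz
        exact ⟨hz.2.1, hz.2.2.trans hs.2⟩
    have hint : IntervalIntegrable (fun x : ℝ => I * logDeriv f (x + s * I)) volume 0 p :=
      ((continuousOn_const.mul (hlogDeriv.continuousOn.comp (f := fun x : ℝ => x + s * I)
        (by fun_prop) fun x _ => hmem x hs)).mono (subset_univ _)).intervalIntegrable
    rw [integral_add_mul_I_eq_of_periodic hper.logDeriv hrect,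
      ← intervalIntegral.integral_const_mul]
    exact intervalIntegral.intervalIntegral_re hint
  have hlog_int : ∀ t ∈ Icc a b,
      IntervalIntegrable (fun x : ℝ => Real.log ‖f (x + t * I)‖) volume 0 p := fun t ht =>
    ((hf.continuousOn.comp (by fun_prop) fun x _ => hmem x ht).norm.log
      (fun x _ => norm_ne_zero_iff.2 (hne _ (hmem x ht)))).mono (subset_univ _)
      |>.intervalIntegrable
  calc ∫ x in (0 : ℝ)..p, Real.log ‖f (x + b * I)‖
      = (∫ x in (0 : ℝ)..p, Real.log ‖f (x + a * I)‖) +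
          ∫ x in (0 : ℝ)..p, ∫ s in a..b, G x s := by
        simp_rw [hvertical]
        rw [intervalIntegral.integral_sub (hlog_int b ⟨hab, le_rfl⟩) (hlog_int a ⟨le_rfl, hab⟩)]
        abel
    _ = (∫ x in (0 : ℝ)..p, Real.log ‖f (x + a * I)‖) +
          ∫ s in a..b, ∫ x in (0 : ℝ)..p, G x s := by
        rw [ContinuousOn.intervalIntegral_intervalIntegral_swap
          (hG.mono (prod_mono (subset_univ _) ?_))]
        rw [uIcc_of_le hab]
    _ = _ := by
        rw [intervalIntegral.integral_congr
            fun s hs => hhorizontal s (by rwa [uIcc_of_le hab] at hs),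
          intervalIntegral.integral_const, smul_eq_mul]

theorem stmt4_general (h y₁ y₂ : ℝ) (f : ℂ → ℂ)
    (hf : AnalyticOnNhd ℂ f {z : ℂ | |z.im| ≤ h})
    (hper : Function.Periodic f 1)
    (hy₁ : -h ≤ y₁) (hy₂ : y₂ ≤ h)
    (c : ℝ) (hc : 0 < c)
    (hlow : ∀ z : ℂ, y₁ ≤ z.im → z.im ≤ y₂ → c ≤ ‖f z‖) :
    (∃ A B : ℝ, ∀ y ∈ Set.Icc y₁ y₂,
        (∫ x in (0 : ℝ)..1, Real.log ‖f (x + y * Complex.I)‖) = A * y + B) ∧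
    (∀ y ∈ Set.Ico y₁ y₂,
        (1 / (2 * Real.pi)) *
            derivWithin
              (fun t : ℝ => ∫ x in (0 : ℝ)..1,
                Real.log ‖f (x + t * Complex.I)‖) (Set.Ici y) y =
          -(((1 / (2 * Real.pi * Complex.I)) *
              ∫ x in (0 : ℝ)..1,
                deriv (fun t : ℝ => f (t + y₁ * Complex.I)) x /
                  f (x + y₁ * Complex.I)).re)) := by
  have hanalytic : AnalyticOnNhd ℂ f (im ⁻¹' Icc y₁ y₂) :=
    hf.mono fun z hz => abs_le.2 ⟨hy₁.trans hz.1, hz.2.trans hy₂⟩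
  have hne : ∀ z ∈ im ⁻¹' Icc y₁ y₂, f z ≠ 0 := fun z hz =>
    norm_pos_iff.1 (hc.trans_le (hlow z hz.1 hz.2))
  set w := ∫ x in (0 : ℝ)..1, logDeriv f (x + y₁ * I)
  set I₁ := ∫ x in (0 : ℝ)..1, Real.log ‖f (x + y₁ * I)‖
  have haffine : ∀ y ∈ Icc y₁ y₂, ∫ x in (0 : ℝ)..1, Real.log ‖f (x + y * I)‖ =
      (I * w).re * y + (I₁ - (I * w).re * y₁) := fun y hy => by
    rw [integral_log_norm_add_mul_I_eq (by exact_mod_cast hper) hy.1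
      (hanalytic.mono fun z hz => ⟨hz.1, hz.2.trans hy.2⟩)
      fun z hz => hne z ⟨hz.1, hz.2.trans hy.2⟩]
    ring
  refine ⟨⟨_, _, haffine⟩, fun y hy => ?_⟩
  have hslope : derivWithin (fun t : ℝ => ∫ x in (0 : ℝ)..1, Real.log ‖f (x + t * I)‖)
      (Ici y) y = (I * w).re := by
    have hev : (fun t : ℝ => ∫ x in (0 : ℝ)..1, Real.log ‖f (x + t * I)‖) =ᶠ[𝓝[≥] y]
        fun t => (I * w).re * t + (I₁ - (I * w).re * y₁) :=
      eventually_of_mem (Ico_mem_nhdsGE hy.2) fun t ht => haffine t ⟨hy.1.trans ht.1, ht.2.le⟩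
    rw [hev.derivWithin_eq (haffine y (Ico_subset_Icc_self hy))]
    exact (((hasDerivAt_id y).const_mul _).add_const _).hasDerivWithinAt.derivWithin
      (uniqueDiffWithinAt_Ici y) |>.trans (mul_one _)
  have hwinding :
      ∫ x in (0 : ℝ)..1, deriv (fun t : ℝ => f (t + y₁ * I)) x / f (x + y₁ * I) = w := by
    refine intervalIntegral.integral_congr fun x _ => ?_
    have hx : (x : ℂ) + y₁ * I ∈ im ⁻¹' Icc y₁ y₂ := by simpa using hy.1.trans hy.2.le
    rw [logDeriv_apply, ((hanalytic _ hx).differentiableAt.hasDerivAt.comp_add_const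
      (x : ℂ) (y₁ * I)).comp_ofReal.deriv]
  rw [hslope, hwinding, show 1 / (2 * Real.pi * I) * w = -(I * w) / ((2 * Real.pi : ℝ) : ℂ) by
    push_cast; field_simp; ring_nf; rw [I_sq]; ring, div_ofReal_re, neg_re]
  ring

/-- If `f` is analytic and one-periodic on the strip and bounded away from `0` on the
substrip `y₁ ≤ Im z ≤ y₂`, then `I(y) = ∫₀¹ log|f(x+iy)| dx` is affine on `[y₁, y₂]`,
and its right derivative divided by `2π` equals minus the winding number of
`x ↦ f(x + i y₁)` around `0`. -/
theorem stmt4 (h y₁ y₂ : ℝ) (f : ℂ → ℂ)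
    (hf : AnalyticOnNhd ℂ f {z : ℂ | |z.im| ≤ h})
    (hper : Function.Periodic f 1)
    (hy₁ : -h ≤ y₁) (hy₁₂ : y₁ < y₂) (hy₂ : y₂ ≤ h)
    (c : ℝ) (hc : 0 < c)
    (hlow : ∀ z : ℂ, y₁ ≤ z.im → z.im ≤ y₂ → c ≤ ‖f z‖) :
    (∃ A B : ℝ, ∀ y ∈ Set.Icc y₁ y₂,
        (∫ x in (0 : ℝ)..1, Real.log ‖f (x + y * Complex.I)‖) = A * y + B) ∧
    (∀ y ∈ Set.Ico y₁ y₂,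
        (1 / (2 * Real.pi)) *
            derivWithin
              (fun t : ℝ => ∫ x in (0 : ℝ)..1,
                Real.log ‖f (x + t * Complex.I)‖) (Set.Ici y) y =
          -(((1 / (2 * Real.pi * Complex.I)) *
              ∫ x in (0 : ℝ)..1,
                deriv (fun t : ℝ => f (t + y₁ * Complex.I)) x /
                  f (x + y₁ * Complex.I)).re)) :=
  stmt4_general h y₁ y₂ f hf hper hy₁ hy₂ c hc hlow
end

section
/- Let z₀ ∈ ℂ with |Im z₀| < h and define f(z) = e^{2πiz} − e^{2πi z₀}. Then for y ∈ [−h, h] with y ≠ Im z₀, the right derivative of I(y) = ∫₀¹ log|e^{2πi(x+iy)} − e^{2πi z₀}| dx satisfies (1/2π) D₊ I(y) = −1 if y < Im z₀ and = 0 if y ≥ Im z₀. -/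
/-!
The points `e^{2πi(x + it)}`, `x ∈ [0, 1]`, run once around the circle of radius `e^{-2πt}`, so
`I(t)` is the circle average of `log ‖· - e^{2πi z₀}‖` over that circle. By Jensen's formula for a
single linear factor this average is `log R + log⁺ (‖e^{2πi z₀}‖ / R)`, which here equals
`-2π min(t, Im z₀)`. Away from `t = Im z₀` this is differentiable, with derivative `-2π` or `0`.
-/

open Complex Real

lemma intervalIntegral_comp_exp_eq_circleAverage (f : ℂ → ℝ) (t : ℝ) :
    ∫ x in (0 : ℝ)..1, f (cexp (2 * π * I * (x + t * I))) =
      circleAverage f 0 (rexp (-(2 * π * t))) := by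
  have hcircleMap : ∀ x : ℝ,
      cexp (2 * π * I * (x + t * I)) = circleMap 0 (rexp (-(2 * π * t))) (2 * π * x) := by
    intro x
    rw [circleMap_zero, ofReal_exp, ← Complex.exp_add]
    congr 1
    push_cast
    ring_nf
    simp only [I_sq]
    ring
  simp_rw [hcircleMap]
  rw [intervalIntegral.integral_comp_mul_left (fun θ => f (circleMap 0 _ θ)) (by positivity),
    circleAverage_def]
  simp

lemma intervalIntegral_log_norm_exp_sub_exp (z₀ : ℂ) (t : ℝ) :
    ∫ x in (0 : ℝ)..1, Real.log ‖cexp (2 * π * I * (x + t * I)) - cexp (2 * π * I * z₀)‖ =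
      -(2 * π) * min t z₀.im := by
  rw [intervalIntegral_comp_exp_eq_circleAverage (fun z => Real.log ‖z - _‖),
    circleAverage_log_norm_sub_const_eq_log_radius_add_posLog (exp_pos _).ne']
  have hre : (2 * π * I * z₀).re = -(2 * π * z₀.im) := by simp
  rw [zero_sub, norm_neg, norm_exp, hre, ← Real.exp_neg, ← Real.exp_add]
  simp only [Real.log_exp, Real.posLog]
  rcases le_total t z₀.im with h | h
  · rw [min_eq_left h, max_eq_left (by nlinarith [pi_pos])]
    ring
  · rw [min_eq_right h, max_eq_right (by nlinarith [pi_pos])]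
    ring

lemma hasDerivAt_min_const {a y : ℝ} (hne : y ≠ a) :
    HasDerivAt (fun t => min t a) (if y < a then 1 else 0) y := by
  rcases hne.lt_or_gt with hlt | hgt
  · rw [if_pos hlt]
    exact (hasDerivAt_id y).congr_of_eventuallyEq
      (by filter_upwards [Iio_mem_nhds hlt] with t ht using min_eq_left ht.le)
  · rw [if_neg hgt.not_gt]
    exact (hasDerivAt_const y a).congr_of_eventuallyEq
      (by filter_upwards [Ioi_mem_nhds hgt] with t ht using min_eq_right ht.le)

theorem stmt5_general (z₀ : ℂ) (y : ℝ) (hne : y ≠ z₀.im) :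
    derivWithin
        (fun t : ℝ => ∫ x in (0 : ℝ)..1,
          Real.log (‖
            (Complex.exp (2 * Real.pi * Complex.I * (x + t * Complex.I)) -
              Complex.exp (2 * Real.pi * Complex.I * z₀))‖)) (Set.Ici y) y =
      if y < z₀.im then -(2 * Real.pi) else 0 := by
  have hI := (hasDerivAt_min_const hne).const_mul (-(2 * π))
  simp only [← intervalIntegral_log_norm_exp_sub_exp z₀] at hI
  rw [hI.hasDerivWithinAt.derivWithin (uniqueDiffOn_Ici y y Set.self_mem_Ici)]
  split_ifs <;> ring

/-- For `f(z) = e^{2πiz} − e^{2πi z₀}` with `|Im z₀| < h`, the right derivative of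
`I(y) = ∫₀¹ log|e^{2πi(x+iy)} − e^{2πi z₀}| dx` satisfies `(1/2π) D₊I(y) = -1` for
`y < Im z₀` and `= 0` for `y > Im z₀`. -/
theorem stmt5 (h : ℝ) (z₀ : ℂ) (hz : |z₀.im| < h) (y : ℝ) (hy₁ : -h ≤ y) (hy₂ : y ≤ h)
    (hne : y ≠ z₀.im) :
    derivWithin
        (fun t : ℝ => ∫ x in (0 : ℝ)..1,
          Real.log (‖
            (Complex.exp (2 * Real.pi * Complex.I * (x + t * Complex.I)) -
              Complex.exp (2 * Real.pi * Complex.I * z₀))‖)) (Set.Ici y) y =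
      if y < z₀.im then -(2 * Real.pi) else 0 :=
  stmt5_general z₀ y hne
end

section
/- Let g : ℂ → ℂ be analytic on the closed disk of radius h > 0 about x₀ with g(x₀) = 0, sup norm bound ‖g‖ ≤ M on that disk, and write g(z) = (z − x₀)^n (a + H(z)) where a ≠ 0 and H(x₀) = 0 with H analytic. If 0 < r < h·(|a|h^n)/(M + |a|h^n), then g(z) ≠ 0 for all z with 0 < |z − x₀| ≤ r. -/
/-!
On the boundary circle `|z - x₀| = h` the factorisation gives `|a + H z| ≤ M / hⁿ`, and by the
maximum modulus principle this bound holds on the whole disk; hence `|H| ≤ M / hⁿ + |a|` there.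
Since `H(x₀) = 0`, the Schwarz lemma gives `|H z| ≤ (M / hⁿ + |a|) / h · |z - x₀|`, which the
condition on `r` makes smaller than `|a|` on the punctured disk, so `a + H z ≠ 0`.
-/

open Metric Set

section

variable {E F : Type*} [NormedAddCommGroup E] [NormedSpace ℂ E]
  [NormedAddCommGroup F] [NormedSpace ℂ F]

theorem Complex.norm_le_of_forall_mem_sphere_norm_le {f : ℂ → F} {c : ℂ} {R B : ℝ} (hR : R ≠ 0)
    (hf : DifferentiableOn ℂ f (closedBall c R)) (hB : ∀ w ∈ sphere c R, ‖f w‖ ≤ B)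
    {z : ℂ} (hz : z ∈ closedBall c R) : ‖f z‖ ≤ B :=
  Complex.norm_le_of_forall_mem_frontier_norm_le isBounded_ball
    (hf.diffContOnCl_ball subset_rfl) (by rwa [frontier_ball c hR])
    (by rwa [closure_ball c hR])

theorem Complex.norm_le_div_mul_norm_sub_of_eq_zero {f : E → F} {c z : E} {R B : ℝ}
    (hf : DifferentiableOn ℂ f (ball c R)) (hc : f c = 0) (hB : ∀ w ∈ ball c R, ‖f w‖ ≤ B)
    (hz : z ∈ ball c R) : ‖f z‖ ≤ B / R * ‖z - c‖ := by
  have hmaps : MapsTo f (ball c R) (closedBall (f c) B) := fun w hw => by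
    simpa [hc] using hB w hw
  simpa [hc, dist_eq_norm] using Complex.dist_le_div_mul_dist_of_mapsTo_ball hf hmaps hz

end

theorem Complex.norm_le_div_pow_of_forall_mem_sphere {φ : ℂ → ℂ} {c : ℂ} {R M : ℝ} {n : ℕ}
    (hR : 0 < R) (hφ : DifferentiableOn ℂ φ (closedBall c R))
    (hM : ∀ w ∈ sphere c R, ‖(w - c) ^ n * φ w‖ ≤ M) {z : ℂ} (hz : z ∈ closedBall c R) :
    ‖φ z‖ ≤ M / R ^ n := by
  refine Complex.norm_le_of_forall_mem_sphere_norm_le hR.ne' hφ (fun w hw => ?_) hz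
  have hM := hM w hw
  rw [norm_mul, norm_pow, ← dist_eq_norm, mem_sphere.1 hw] at hM
  rwa [le_div_iff₀' (by positivity)]

theorem lt_of_lt_mul_div_add {h M A r : ℝ} (hh : 0 ≤ h) (hM : 0 ≤ M) (hA : 0 ≤ A)
    (hr : r < h * A / (M + A)) : r < h :=
  hr.trans_le (div_le_of_le_mul₀ (by positivity) hh (by nlinarith))

theorem div_add_div_mul_lt {h M α r : ℝ} (n : ℕ) (hh : 0 < h) (hα : 0 ≤ α) (hr : 0 < r)
    (hr' : r < h * (α * h ^ n) / (M + α * h ^ n)) : (M / h ^ n + α) / h * r < α := by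
  have hhn : 0 < h ^ n := pow_pos hh n
  have hD : 0 < M + α * h ^ n := by
    rcases div_pos_iff.1 (hr.trans hr') with ⟨-, hD⟩ | ⟨hneg, -⟩
    · exact hD
    · exact absurd hneg (not_lt.2 (by positivity))
  rw [lt_div_iff₀ hD] at hr'
  rw [div_add' _ _ _ hhn.ne', div_div, div_mul_eq_mul_div, div_lt_iff₀ (by positivity)]
  nlinarith

theorem stmt11_general (x₀ : ℂ) (h M r : ℝ) (hh : 0 < h) (n : ℕ) (a : ℂ) (g H : ℂ → ℂ)
    (hH : AnalyticOnNhd ℂ H (Metric.closedBall x₀ h))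
    (hbound : ∀ z ∈ Metric.closedBall x₀ h, ‖g z‖ ≤ M)
    (hH0 : H x₀ = 0)
    (hfac : ∀ z ∈ Metric.closedBall x₀ h, g z = (z - x₀) ^ n * (a + H z))
    (hr' : r < h * (‖a‖ * h ^ n) / (M + ‖a‖ * h ^ n)) :
    ∀ z : ℂ, z ≠ x₀ → ‖z - x₀‖ ≤ r → g z ≠ 0 := by
  intro z hz hzr
  have hM : 0 ≤ M := (norm_nonneg _).trans (hbound x₀ (mem_closedBall_self hh.le))
  have hρ : 0 < ‖z - x₀‖ := norm_pos_iff.2 (sub_ne_zero.2 hz)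
  have hzball : z ∈ ball x₀ h :=
    mem_ball_iff_norm.2 (hzr.trans_lt (lt_of_lt_mul_div_add hh.le hM (by positivity) hr'))
  have hsum : ∀ w ∈ closedBall x₀ h, ‖a + H w‖ ≤ M / h ^ n :=
    fun w => Complex.norm_le_div_pow_of_forall_mem_sphere hh (hH.differentiableOn.const_add a)
      fun w hw => hfac w (sphere_subset_closedBall hw) ▸ hbound w (sphere_subset_closedBall hw)
  have hHle : ∀ w ∈ ball x₀ h, ‖H w‖ ≤ M / h ^ n + ‖a‖ := fun w hw => by
    linarith [norm_le_add_norm_add' a (H w), hsum w (ball_subset_closedBall hw)]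
  have hHz : ‖H z‖ < ‖a‖ :=
    calc ‖H z‖ ≤ (M / h ^ n + ‖a‖) / h * ‖z - x₀‖ := Complex.norm_le_div_mul_norm_sub_of_eq_zero
          (hH.differentiableOn.mono ball_subset_closedBall) hH0 hHle hzball
      _ ≤ (M / h ^ n + ‖a‖) / h * r := by gcongr
      _ < ‖a‖ := div_add_div_mul_lt n hh (norm_nonneg a) (hρ.trans_le hzr) hr'
  have hne : a + H z ≠ 0 := norm_pos_iff.1 (by linarith [norm_le_add_norm_add a (H z)])
  rw [hfac z (ball_subset_closedBall hzball)]
  exact mul_ne_zero (pow_ne_zero n (sub_ne_zero.2 hz)) hne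

/-- If `g` is analytic on the closed disk of radius `h` about `x₀`, vanishes at `x₀`,
is bounded by `M`, and factors as `g(z) = (z − x₀)^n (a + H(z))` with `a ≠ 0`,
`H` analytic, `H(x₀) = 0`, then `g` has no zero in the punctured disk of radius `r`
whenever `0 < r < h·(|a|hⁿ)/(M + |a|hⁿ)`. -/
theorem stmt11 (x₀ : ℂ) (h M r : ℝ) (hh : 0 < h) (n : ℕ) (a : ℂ) (g H : ℂ → ℂ)
    (hg : AnalyticOnNhd ℂ g (Metric.closedBall x₀ h))
    (hH : AnalyticOnNhd ℂ H (Metric.closedBall x₀ h))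
    (hbound : ∀ z ∈ Metric.closedBall x₀ h, ‖g z‖ ≤ M)
    (hg0 : g x₀ = 0) (ha : a ≠ 0) (hH0 : H x₀ = 0)
    (hfac : ∀ z ∈ Metric.closedBall x₀ h, g z = (z - x₀) ^ n * (a + H z))
    (hr : 0 < r)
    (hr' : r < h * (‖a‖ * h ^ n) / (M + ‖a‖ * h ^ n)) :
    ∀ z : ℂ, z ≠ x₀ → ‖z - x₀‖ ≤ r → g z ≠ 0 :=
  stmt11_general x₀ h M r hh n a g H hH hbound hH0 hfac hr'
end

section
/- Let g : ℂ → ℂ be analytic on the closed disk of radius h > 0 about x₀ with sup norm bound ‖g‖ ≤ M on that disk and g(x₀) ≠ 0. If 0 < r < h·|g(x₀)|/(M + |g(x₀)|), then g(z) ≠ 0 for all z with |z − x₀| ≤ r. -/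
/-!
Apply the Schwarz lemma to `g - g x₀`: on the disk of radius `h` it is bounded by `M + |g x₀|`,
so on the disk of radius `r` it is bounded by `(M + |g x₀|) r / h < |g x₀|`, which leaves no room
for `g` to vanish there.
-/

open Metric

namespace Complex

variable {E : Type*} [NormedAddCommGroup E] [NormedSpace ℂ E] {f : ℂ → E} {c z : ℂ} {R M : ℝ}

theorem dist_le_div_mul_dist_of_norm_le (hf : DifferentiableOn ℂ f (ball c R))
    (hM : ∀ w ∈ ball c R, ‖f w‖ ≤ M) (hz : z ∈ ball c R) :
    dist (f z) (f c) ≤ (M + ‖f c‖) / R * dist z c := by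
  refine dist_le_div_mul_dist_of_mapsTo_ball hf (fun w hw => ?_) hz
  calc dist (f w) (f c) ≤ ‖f w‖ + ‖f c‖ := dist_le_norm_add_norm _ _
    _ ≤ M + ‖f c‖ := by gcongr; exact hM w hw

theorem apply_ne_zero_of_norm_le (hf : DifferentiableOn ℂ f (ball c R))
    (hM : ∀ w ∈ ball c R, ‖f w‖ ≤ M) (hz : z ∈ ball c R)
    (hzc : dist z c * (M + ‖f c‖) < R * ‖f c‖) : f z ≠ 0 := by
  have hR : 0 < R := pos_of_mem_ball hz
  have hdist : dist (f z) (f c) < ‖f c‖ := by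
    calc dist (f z) (f c) ≤ (M + ‖f c‖) / R * dist z c :=
          dist_le_div_mul_dist_of_norm_le hf hM hz
      _ < ‖f c‖ := by rw [div_mul_eq_mul_div, div_lt_iff₀ hR]; linarith
  intro hfz
  simp [hfz] at hdist

end Complex

theorem stmt12_general (x₀ : ℂ) (h M r : ℝ) (hh : 0 < h) (g : ℂ → ℂ)
    (hg : AnalyticOnNhd ℂ g (Metric.closedBall x₀ h))
    (hbound : ∀ z ∈ Metric.closedBall x₀ h, ‖g z‖ ≤ M)
    (hg0 : g x₀ ≠ 0)
    (hr' : r < h * ‖g x₀‖ / (M + ‖g x₀‖)) :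
    ∀ z : ℂ, ‖z - x₀‖ ≤ r → g z ≠ 0 := by
  intro z hz
  have hg0_pos : 0 < ‖g x₀‖ := norm_pos_iff.2 hg0
  have hM : ‖g x₀‖ ≤ M := hbound x₀ (mem_closedBall_self hh.le)
  have hzr : dist z x₀ * (M + ‖g x₀‖) < h * ‖g x₀‖ := by
    rw [lt_div_iff₀ (by linarith)] at hr'
    rw [dist_eq_norm]
    nlinarith
  have hz_mem : z ∈ ball x₀ h := by
    rw [mem_ball]
    nlinarith [dist_nonneg (x := z) (y := x₀)]
  exact Complex.apply_ne_zero_of_norm_le (hg.mono ball_subset_closedBall).differentiableOn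
    (fun w hw => hbound w (ball_subset_closedBall hw)) hz_mem hzr

/-- If `g` is analytic on the closed disk of radius `h` about `x₀`, bounded by `M`,
with `g(x₀) ≠ 0`, then `g` has no zero on the disk of radius `r` whenever
`0 < r < h·|g(x₀)|/(M + |g(x₀)|)`. -/
theorem stmt12 (x₀ : ℂ) (h M r : ℝ) (hh : 0 < h) (g : ℂ → ℂ)
    (hg : AnalyticOnNhd ℂ g (Metric.closedBall x₀ h))
    (hbound : ∀ z ∈ Metric.closedBall x₀ h, ‖g z‖ ≤ M)
    (hg0 : g x₀ ≠ 0)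
    (hr : 0 < r)
    (hr' : r < h * ‖g x₀‖ / (M + ‖g x₀‖)) :
    ∀ z : ℂ, ‖z - x₀‖ ≤ r → g z ≠ 0 :=
  stmt12_general x₀ h M r hh g hg hbound hg0 hr'
end

section
/- Let D : [0,1] → M₂(ℂ) (one-periodic, continuous) be of the form D(x) = [[1, g(x)⁻¹], [g(x)⁻¹, 0]] where g : [0,1] → ℂ is continuous with m := inf_x |g(x)| > 2. Set σ := min{1, (m−1)/(m(m−2))}. Then for every x and every vector v = (v₁, v₂) with |v₂| ≤ σ|v₁|, the image w = D(x)v satisfies |w₂| ≤ σ|w₁|, i.e., the cone {(v₁,v₂) : |v₂| ≤ σ|v₁|} is invariant under each D(x). -/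
/-- Cone invariance: if `m := inf |g| > 2` and `σ := min {1, (m−1)/(m(m−2))}`, then
for `D(x) = [[1, g(x)⁻¹], [g(x)⁻¹, 0]]` the cone `{(v₁,v₂) : |v₂| ≤ σ|v₁|}` is
invariant: the image `w = D(x)v` satisfies `|w₂| ≤ σ|w₁|`. -/
theorem stmt13 (g : ℝ → ℂ) (hcont : Continuous g) (hper : Function.Periodic g 1)
    (m σ : ℝ) (hmdef : m = ⨅ x : ℝ, ‖g x‖) (hm : 2 < m)
    (hσ : σ = min 1 ((m - 1) / (m * (m - 2)))) :
    ∀ x : ℝ, ∀ v₁ v₂ : ℂ, ‖v₂‖ ≤ σ * ‖v₁‖ →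
      ‖(g x)⁻¹ * v₁‖ ≤ σ * ‖v₁ + (g x)⁻¹ * v₂‖ := by
  intro x v₁ v₂ hv
  -- basic facts about σ
  have hm0 : 0 < m := by linarith
  have hm2 : 0 < m - 2 := by linarith
  have hfrac : 0 < (m - 1) / (m * (m - 2)) := div_pos (by linarith) (by nlinarith)
  have hσ0 : 0 < σ := by rw [hσ]; exact lt_min one_pos hfrac
  have hσ1 : σ ≤ 1 := by rw [hσ]; exact min_le_left _ _
  have hσm1 : 1 ≤ σ * (m - 1) := by
    rcases min_cases 1 ((m - 1) / (m * (m - 2))) with ⟨h1, _⟩ | ⟨h1, _⟩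
    · rw [hσ, h1]; linarith
    · rw [hσ, h1]
      rw [div_mul_eq_mul_div, le_div_iff₀ (by positivity)]
      nlinarith
  have hkey : 1 ≤ σ * m - σ ^ 2 := by nlinarith
  -- |g x| ≥ m
  have hG : m ≤ ‖g x‖ := by
    rw [hmdef]
    exact ciInf_le ⟨0, fun y ⟨z, hz⟩ => hz ▸ norm_nonneg _⟩ x
  set G := ‖g x‖ with hGdef
  have hG0 : 0 < G := by linarith
  have hgx : g x ≠ 0 := by
    intro h
    rw [hGdef, h] at hG0
    simp at hG0
  set a := ‖v₁‖ with ha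
  set b := ‖v₂‖ with hb
  have ha0 : 0 ≤ a := norm_nonneg _
  have hb0 : 0 ≤ b := norm_nonneg _
  -- LHS = a / G
  have hLHS : ‖(g x)⁻¹ * v₁‖ = G⁻¹ * a := by
    rw [norm_mul, norm_inv]
  -- reverse triangle inequality
  have htri : a - G⁻¹ * b ≤ ‖v₁ + (g x)⁻¹ * v₂‖ := by
    have h1 : ‖v₁ + (g x)⁻¹ * v₂‖ + ‖(g x)⁻¹ * v₂‖
        ≥ ‖v₁‖ := by
      calc ‖v₁‖ = ‖(v₁ + (g x)⁻¹ * v₂) + -((g x)⁻¹ * v₂)‖ := by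
            ring_nf
        _ ≤ ‖v₁ + (g x)⁻¹ * v₂‖ + ‖-((g x)⁻¹ * v₂)‖ :=
            norm_add_le _ _
        _ = ‖v₁ + (g x)⁻¹ * v₂‖ + ‖(g x)⁻¹ * v₂‖ := by
            rw [norm_neg]
    have h2 : ‖(g x)⁻¹ * v₂‖ = G⁻¹ * b := by rw [norm_mul, norm_inv]
    rw [h2] at h1
    linarith
  rw [hLHS]
  have hstep : σ * (a - G⁻¹ * b) ≤ σ * ‖v₁ + (g x)⁻¹ * v₂‖ :=
    mul_le_mul_of_nonneg_left htri (le_of_lt hσ0)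
  refine le_trans ?_ hstep
  have hmain : a ≤ σ * (G * a - b) := by
    nlinarith [mul_le_mul_of_nonneg_left hv hσ0.le, mul_le_mul_of_nonneg_right hG ha0,
      mul_nonneg hσ0.le ha0]
  have heq : σ * (a - G⁻¹ * b) = G⁻¹ * (σ * (G * a - b)) := by
    have hc : G⁻¹ * G = 1 := inv_mul_cancel₀ hG0.ne'
    linear_combination (-(σ * a)) * hc
  rw [heq]
  exact mul_le_mul_of_nonneg_left hmain (inv_nonneg.mpr hG0.le)
end

section
/- Let g : ℝ → ℂ be continuous and one-periodic with m := inf_x |g(x)| > 2, and let σ := min{1, (m−1)/(m(m−2))}. For any x and any unit vector v in the cone C = {(v₁,v₂) ∈ ℂ² : |v₂| ≤ σ|v₁|}, the matrix D(x) = [[1, g(x)⁻¹],[g(x)⁻¹, 0]] satisfies the norm bounds ((1 − σ/m)² + 1/m²)/(1 + σ²) ≤ ‖D(x)v‖²/‖v‖² ≤ (1 + σ/m)² + 1/m². -/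
/-!
Write `a = ‖v₁‖` and `t = ‖g x‖⁻¹ ≤ 1/m`. On the cone, `‖D(x)v‖²` lies between
`a² ((1 - σt)² + t²)` and `a² ((1 + σt)² + t²)`, while `1/(1 + σ²) ≤ a² ≤ 1`. The upper
quadratic is increasing in `t ≥ 0`; the lower one, `1 - 2σt + (1 + σ²)t²`, is decreasing on
`[0, σ/(1 + σ²)]`, and the choice of `σ` guarantees `σ(m - 1) ≥ 1`, hence `1/m ≤ σ/(1 + σ²)`.
-/

lemma inv_sub_one_le_min_one {m : ℝ} (hm : 2 < m) :
    (m - 1)⁻¹ ≤ min 1 ((m - 1) / (m * (m - 2))) := by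
  have hm1 : 0 < m - 1 := by linarith
  refine le_min (inv_le_one_of_one_le₀ (by linarith)) ?_
  rw [inv_le_iff_one_le_mul₀ hm1, div_mul_eq_mul_div, one_le_div (by nlinarith)]
  nlinarith

lemma one_add_sq_div_le_of_inv_sub_one_le {σ m : ℝ} (hm : 1 < m) (hσ1 : σ ≤ 1)
    (hσ : (m - 1)⁻¹ ≤ σ) : (1 + σ ^ 2) / m ≤ σ := by
  have hm1 : 0 < m - 1 := by linarith
  have hσm : 1 ≤ σ * (m - 1) := by rwa [inv_le_iff_one_le_mul₀ hm1] at hσ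
  have hσ0 : 0 ≤ σ := (inv_pos.2 hm1).le.trans hσ
  rw [div_le_iff₀ (by linarith)]
  nlinarith

lemma sub_mul_sq_add_sq_le {σ s t : ℝ} (hts : t ≤ s) (hs : (1 + σ ^ 2) * s ≤ σ) :
    (1 - σ * s) ^ 2 + s ^ 2 ≤ (1 - σ * t) ^ 2 + t ^ 2 := by
  have hσ2 : 0 ≤ 1 + σ ^ 2 := by positivity
  nlinarith [mul_nonneg (sub_nonneg.2 hts)
    (by nlinarith [mul_le_mul_of_nonneg_left hts hσ2] : 0 ≤ 2 * σ - (1 + σ ^ 2) * (t + s))]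

section Cone

variable {𝕜 : Type*} [NormedDivisionRing 𝕜] {σ : ℝ} {c v₁ v₂ : 𝕜}

lemma norm_add_mul_sq_add_norm_mul_sq_le (hv : ‖v₂‖ ≤ σ * ‖v₁‖) :
    ‖v₁ + c * v₂‖ ^ 2 + ‖c * v₁‖ ^ 2 ≤ ‖v₁‖ ^ 2 * ((1 + σ * ‖c‖) ^ 2 + ‖c‖ ^ 2) := by
  have h : ‖v₁ + c * v₂‖ ≤ ‖v₁‖ * (1 + σ * ‖c‖) :=
    calc ‖v₁ + c * v₂‖ ≤ ‖v₁‖ + ‖c‖ * ‖v₂‖ := (norm_add_le _ _).trans_eq (by rw [norm_mul])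
      _ ≤ ‖v₁‖ + ‖c‖ * (σ * ‖v₁‖) := by gcongr
      _ = ‖v₁‖ * (1 + σ * ‖c‖) := by ring
  have h2 := pow_le_pow_left₀ (norm_nonneg _) h 2
  rw [norm_mul]
  nlinarith

lemma le_norm_add_mul_sq_add_norm_mul_sq (hv : ‖v₂‖ ≤ σ * ‖v₁‖) (hσc : σ * ‖c‖ ≤ 1) :
    ‖v₁‖ ^ 2 * ((1 - σ * ‖c‖) ^ 2 + ‖c‖ ^ 2) ≤ ‖v₁ + c * v₂‖ ^ 2 + ‖c * v₁‖ ^ 2 := by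
  have h : ‖v₁‖ * (1 - σ * ‖c‖) ≤ ‖v₁ + c * v₂‖ :=
    calc ‖v₁‖ * (1 - σ * ‖c‖) = ‖v₁‖ - ‖c‖ * (σ * ‖v₁‖) := by ring
      _ ≤ ‖v₁‖ - ‖c‖ * ‖v₂‖ := by gcongr
      _ = ‖v₁‖ - ‖c * v₂‖ := by rw [norm_mul]
      _ ≤ ‖v₁ + c * v₂‖ := norm_sub_le_norm_add _ _
  have h2 := pow_le_pow_left₀ (mul_nonneg (norm_nonneg _) (sub_nonneg.2 hσc)) h 2
  rw [norm_mul]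
  nlinarith

end Cone

theorem stmt19_general (g : ℝ → ℂ)
    (m σ : ℝ) (hmdef : m = ⨅ x : ℝ, ‖g x‖) (hm : 2 < m)
    (hσ : σ = min 1 ((m - 1) / (m * (m - 2)))) :
    ∀ x : ℝ, ∀ v₁ v₂ : ℂ, ‖v₂‖ ≤ σ * ‖v₁‖ →
      ‖v₁‖ ^ 2 + ‖v₂‖ ^ 2 = 1 →
      ((1 - σ / m) ^ 2 + 1 / m ^ 2) / (1 + σ ^ 2) ≤
          ‖v₁ + (g x)⁻¹ * v₂‖ ^ 2 + ‖(g x)⁻¹ * v₁‖ ^ 2 ∧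
        ‖v₁ + (g x)⁻¹ * v₂‖ ^ 2 + ‖(g x)⁻¹ * v₁‖ ^ 2 ≤
          (1 + σ / m) ^ 2 + 1 / m ^ 2 := by
  intro x v₁ v₂ hv hnorm
  have hσm : (m - 1)⁻¹ ≤ σ := hσ ▸ inv_sub_one_le_min_one hm
  have hσ1 : σ ≤ 1 := hσ ▸ min_le_left _ _
  have hσ0 : 0 ≤ σ := (inv_pos.2 (by linarith)).le.trans hσm
  have hslope : (1 + σ ^ 2) * m⁻¹ ≤ σ :=
    (div_eq_mul_inv _ _).symm.trans_le (one_add_sq_div_le_of_inv_sub_one_le (by linarith) hσ1 hσm)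
  have hgx : m ≤ ‖g x‖ := hmdef ▸ ciInf_le ⟨0, by rintro _ ⟨y, rfl⟩; positivity⟩ x
  have ht : ‖(g x)⁻¹‖ ≤ m⁻¹ := (norm_inv (g x)).trans_le (inv_anti₀ (by linarith) hgx)
  have hm2 : m⁻¹ ≤ 2⁻¹ := inv_anti₀ (by norm_num) hm.le
  have ha : 1 ≤ ‖v₁‖ ^ 2 * (1 + σ ^ 2) := by nlinarith [pow_le_pow_left₀ (norm_nonneg _) hv 2]
  rw [div_eq_mul_inv σ, one_div, ← inv_pow]
  constructor
  · calc ((1 - σ * m⁻¹) ^ 2 + m⁻¹ ^ 2) / (1 + σ ^ 2)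
        ≤ ‖v₁‖ ^ 2 * ((1 - σ * m⁻¹) ^ 2 + m⁻¹ ^ 2) := by
          rw [div_le_iff₀ (by positivity)]; nlinarith [sq_nonneg (1 - σ * m⁻¹), sq_nonneg m⁻¹]
      _ ≤ ‖v₁‖ ^ 2 * ((1 - σ * ‖(g x)⁻¹‖) ^ 2 + ‖(g x)⁻¹‖ ^ 2) :=
          mul_le_mul_of_nonneg_left (sub_mul_sq_add_sq_le ht hslope) (sq_nonneg _)
      _ ≤ _ := le_norm_add_mul_sq_add_norm_mul_sq hv (by nlinarith [norm_nonneg (g x)⁻¹])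
  · calc _ ≤ ‖v₁‖ ^ 2 * ((1 + σ * ‖(g x)⁻¹‖) ^ 2 + ‖(g x)⁻¹‖ ^ 2) :=
          norm_add_mul_sq_add_norm_mul_sq_le hv
      _ ≤ 1 * ((1 + σ * m⁻¹) ^ 2 + m⁻¹ ^ 2) := by
          gcongr; nlinarith [sq_nonneg ‖v₂‖]
      _ = _ := one_mul _

/-- Norm bounds on the cone: for `m := inf |g| > 2`, `σ := min {1, (m−1)/(m(m−2))}`,
any unit vector `(v₁, v₂)` with `|v₂| ≤ σ|v₁|`, and `w = D(x)v` with
`D(x) = [[1, g(x)⁻¹],[g(x)⁻¹, 0]]`: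
`((1 − σ/m)² + 1/m²)/(1 + σ²) ≤ ‖D(x)v‖² ≤ (1 + σ/m)² + 1/m²`. -/
theorem stmt19 (g : ℝ → ℂ) (hcont : Continuous g) (hper : Function.Periodic g 1)
    (m σ : ℝ) (hmdef : m = ⨅ x : ℝ, ‖g x‖) (hm : 2 < m)
    (hσ : σ = min 1 ((m - 1) / (m * (m - 2)))) :
    ∀ x : ℝ, ∀ v₁ v₂ : ℂ, ‖v₂‖ ≤ σ * ‖v₁‖ →
      ‖v₁‖ ^ 2 + ‖v₂‖ ^ 2 = 1 →
      ((1 - σ / m) ^ 2 + 1 / m ^ 2) / (1 + σ ^ 2) ≤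
          ‖v₁ + (g x)⁻¹ * v₂‖ ^ 2 + ‖(g x)⁻¹ * v₁‖ ^ 2 ∧
        ‖v₁ + (g x)⁻¹ * v₂‖ ^ 2 + ‖(g x)⁻¹ * v₁‖ ^ 2 ≤
          (1 + σ / m) ^ 2 + 1 / m ^ 2 :=
  stmt19_general g m σ hmdef hm hσ
end
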